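/- arXiv:1302.3831 — 2 statements merged into one kernel-verified Lean document; each statement's English description precedes it below -/
import Mathlib

section
/- Let {ab_{ij}}_{i,j ∈ {1,2}} and {ab'_{ij}}_{i,j ∈ {1,2}} be orthonormal bases of ℂ⁴, let {a₁, a₂}, {b₁, b₂}, {b'₁, b'₂} be orthonormal bases of ℂ², let I_AB and I_AB' be the unitary operators on ℂ⁴ determined by I_AB ab_{ij} = aᵢ ⊗ bⱼ and I_AB' ab'_{ij} = aᵢ ⊗ b'ⱼ, and let U be the unitary operator on ℂ⁴ determined by U ab_{ij} = ab'_{ij}. Then the composite I_AB' ∘ U ∘ I_AB⁻¹ satisfies (I_AB' ∘ U ∘ I_AB⁻¹)(u ⊗ v) = u ⊗ (W v) for all u, v ∈ ℂ², where W is the unitary operator on ℂ² with W bⱼ = b'ⱼ; consequently, for all real μ₁, μ₂, ν₁, ν₂, conjugation by I_AB' ∘ U ∘ I_AB⁻¹ transforms E_A ⊗ E_B into E_A ⊗ E_{B'}, where E_A = Σᵢ μᵢ|aᵢ⟩⟨aᵢ|, E_B = Σⱼ νⱼ|bⱼ⟩⟨bⱼ| and E_{B'} = Σⱼ νⱼ|b'ⱼ⟩⟨b'ⱼ|.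 In other words, in the contextual representation where each coincidence measurement uses its own isomorphism, the connecting dynamical evolutions are product evolutions. -/
/-! The composite `V = I_AB' ∘ U ∘ I_AB⁻¹` sends `aᵢ ⊗ bⱼ` to `aᵢ ⊗ b'ⱼ = aᵢ ⊗ W bⱼ`; both sides of
`V (u ⊗ v) = u ⊗ W v` are bilinear in `(u, v)`, so this identity extends from the product basis to
all `u, v`. Since `W` carries the eigenbasis `b` of `E_B` to the eigenbasis `b'` of `E_{B'}` with the
same eigenvalues, `W E_B = E_{B'} W`; hence `V (E_A ⊗ E_B) = (E_A ⊗ E_{B'}) V` on product vectors,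
which span `ℂ⁴`. -/

open scoped InnerProductSpace Kronecker Matrix

noncomputable section

/-- Tensor product `u ⊗ v` of two vectors of ℂ², as a vector of ℂ⁴ (the model of ℂ²⊗ℂ²):
`(u ⊗ v)(i,j) = u i * v j`. -/
def tp (u v : EuclideanSpace ℂ (Fin 2)) : EuclideanSpace ℂ (Fin 2 × Fin 2) :=
  WithLp.toLp 2 (fun p => u p.1 * v p.2)

/-- Outer product `|w⟩⟨w|`, the matrix with entries `w i * conj (w j)`. -/
def outer {n : Type*} [Fintype n] (w : EuclideanSpace ℂ n) : Matrix n n ℂ :=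
  fun i j => w i * (starRingEnd ℂ) (w j)

/-- Action of a matrix on a Euclidean-space vector by matrix-vector multiplication. -/
def mulVecE {n : Type*} [Fintype n] (M : Matrix n n ℂ) (x : EuclideanSpace ℂ n) :
    EuclideanSpace ℂ n := WithLp.toLp 2 (M.mulVec x)

local notation "ℂ²" => EuclideanSpace ℂ (Fin 2)
local notation "ℂ⁴" => EuclideanSpace ℂ (Fin 2 × Fin 2)

lemma mulVecE_eq_toEuclideanLin {n : Type*} [Fintype n] [DecidableEq n] (M : Matrix n n ℂ)
    (x : EuclideanSpace ℂ n) : mulVecE M x = Matrix.toEuclideanLin M x := rfl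

lemma mulVecE_outer {n : Type*} [Fintype n] (w x : EuclideanSpace ℂ n) :
    mulVecE (outer w) x = ⟪w, x⟫_ℂ • w := by
  ext i
  simp [mulVecE, outer, Matrix.mulVec, dotProduct, PiLp.inner_apply, Finset.mul_sum, mul_comm,
    mul_left_comm]

lemma mulVecE_sum_smul_outer {n ι : Type*} [Fintype n] [DecidableEq n] [Fintype ι] (c : ι → ℂ)
    (w : ι → EuclideanSpace ℂ n) (x : EuclideanSpace ℂ n) :
    mulVecE (∑ k, c k • outer (w k)) x = ∑ k, (c k * ⟪w k, x⟫_ℂ) • w k := by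
  rw [mulVecE_eq_toEuclideanLin, map_sum, LinearMap.sum_apply]
  simp only [map_smul, LinearMap.smul_apply, ← mulVecE_eq_toEuclideanLin, mulVecE_outer, smul_smul]

lemma mulVecE_sum_smul_outer_of_orthonormal {n ι : Type*} [Fintype n] [DecidableEq n] [Fintype ι]
    [DecidableEq ι] {w : ι → EuclideanSpace ℂ n} (hw : Orthonormal ℂ w) (c : ι → ℂ) (i : ι) :
    mulVecE (∑ k, c k • outer (w k)) (w i) = c i • w i := by
  simp [mulVecE_sum_smul_outer, orthonormal_iff_ite.mp hw]

lemma tp_add_left (u u' v : ℂ²) : tp (u + u') v = tp u v + tp u' v := by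
  ext; simp [tp, add_mul]

lemma tp_add_right (u v v' : ℂ²) : tp u (v + v') = tp u v + tp u v' := by
  ext; simp [tp, mul_add]

lemma tp_smul_left (c : ℂ) (u v : ℂ²) : tp (c • u) v = c • tp u v := by
  ext; simp [tp, mul_assoc]

lemma tp_smul_right (c : ℂ) (u v : ℂ²) : tp u (c • v) = c • tp u v := by
  ext; simp [tp, mul_left_comm]

def tpBilin : ℂ² →ₗ[ℂ] ℂ² →ₗ[ℂ] ℂ⁴ :=
  LinearMap.mk₂ ℂ tp tp_add_left tp_smul_left tp_add_right tp_smul_right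

lemma tp_single_single (i j : Fin 2) :
    tp (EuclideanSpace.single i 1) (EuclideanSpace.single j 1) =
      EuclideanSpace.single (i, j) 1 := by
  ext ⟨k, l⟩
  simp [tp, Prod.ext_iff, ite_and]
  split_ifs <;> rfl

lemma linearMap_ext_tp {M : Type*} [AddCommGroup M] [Module ℂ M] {f g : ℂ⁴ →ₗ[ℂ] M}
    (h : ∀ u v, f (tp u v) = g (tp u v)) : f = g :=
  (EuclideanSpace.basisFun (Fin 2 × Fin 2) ℂ).toBasis.ext fun ⟨i, j⟩ => by
    simpa [tp_single_single] using h (EuclideanSpace.single i 1) (EuclideanSpace.single j 1)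

lemma mulVecE_kronecker_tp (A B : Matrix (Fin 2) (Fin 2) ℂ) (u v : ℂ²) :
    mulVecE (A ⊗ₖ B) (tp u v) = tp (mulVecE A u) (mulVecE B v) := by
  ext ⟨i, j⟩
  simp only [mulVecE, tp, Matrix.mulVec, dotProduct, Matrix.kroneckerMap_apply, PiLp.toLp_apply,
    Fintype.sum_prod_type, Finset.sum_mul_sum, mul_mul_mul_comm]

lemma map_tp_of_map_tp_basis {a b : Fin 2 → ℂ²} (ha : LinearIndependent ℂ a)
    (hb : LinearIndependent ℂ b) {V : ℂ⁴ →ₗ[ℂ] ℂ⁴} {W : ℂ² →ₗ[ℂ] ℂ²}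
    (h : ∀ i j, V (tp (a i) (b j)) = tp (a i) (W (b j))) (u v : ℂ²) :
    V (tp u v) = tp u (W v) := by
  have hcard : Fintype.card (Fin 2) = Module.finrank ℂ ℂ² := by simp
  have hbilin : tpBilin.compr₂ V = tpBilin.compl₂ W :=
    LinearMap.ext_basis (basisOfLinearIndependentOfCardEqFinrank' a ha hcard)
      (basisOfLinearIndependentOfCardEqFinrank' b hb hcard) (by simpa [tpBilin] using h)
  simpa [tpBilin] using LinearMap.congr_fun₂ hbilin u v

lemma map_mulVecE_sum_smul_outer {n : Type*} [Fintype n] [DecidableEq n]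
    {b b' : n → EuclideanSpace ℂ n} (hb : Orthonormal ℂ b) (hb' : Orthonormal ℂ b')
    {W : EuclideanSpace ℂ n →ₗ[ℂ] EuclideanSpace ℂ n} (hW : ∀ j, W (b j) = b' j) (c : n → ℂ)
    (v : EuclideanSpace ℂ n) :
    W (mulVecE (∑ j, c j • outer (b j)) v) = mulVecE (∑ j, c j • outer (b' j)) (W v) := by
  have hcomm : W ∘ₗ Matrix.toEuclideanLin (∑ j, c j • outer (b j)) =
      Matrix.toEuclideanLin (∑ j, c j • outer (b' j)) ∘ₗ W :=
    (basisOfLinearIndependentOfCardEqFinrank' b hb.linearIndependent (by simp)).ext fun j => by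
      simp only [LinearMap.comp_apply, ← mulVecE_eq_toEuclideanLin,
        coe_basisOfLinearIndependentOfCardEqFinrank']
      rw [mulVecE_sum_smul_outer_of_orthonormal hb, map_smul, hW,
        mulVecE_sum_smul_outer_of_orthonormal hb']
  exact LinearMap.congr_fun hcomm v

lemma map_mulVecE_kronecker {V : ℂ⁴ →ₗ[ℂ] ℂ⁴} {W : ℂ² →ₗ[ℂ] ℂ²}
    (hV : ∀ u v, V (tp u v) = tp u (W v)) (A : Matrix (Fin 2) (Fin 2) ℂ)
    {B B' : Matrix (Fin 2) (Fin 2) ℂ} (hW : ∀ v, W (mulVecE B v) = mulVecE B' (W v)) (y : ℂ⁴) :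
    V (mulVecE (A ⊗ₖ B) y) = mulVecE (A ⊗ₖ B') (V y) := by
  have hcomm : V ∘ₗ Matrix.toEuclideanLin (A ⊗ₖ B) = Matrix.toEuclideanLin (A ⊗ₖ B') ∘ₗ V :=
    linearMap_ext_tp fun u v => by
      simp [← mulVecE_eq_toEuclideanLin, mulVecE_kronecker_tp, hV, hW]
  exact LinearMap.congr_fun hcomm y

theorem contextual_isomorphisms_give_product_evolutions_general
    (ab ab' : Fin 2 → Fin 2 → EuclideanSpace ℂ (Fin 2 × Fin 2))
    (a b b' : Fin 2 → EuclideanSpace ℂ (Fin 2))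
    (ha : Orthonormal ℂ a) (hb : Orthonormal ℂ b) (hb' : Orthonormal ℂ b')
    (IAB IAB' U : EuclideanSpace ℂ (Fin 2 × Fin 2) ≃ₗᵢ[ℂ] EuclideanSpace ℂ (Fin 2 × Fin 2))
    (hIAB : ∀ i j : Fin 2, IAB (ab i j) = tp (a i) (b j))
    (hIAB' : ∀ i j : Fin 2, IAB' (ab' i j) = tp (a i) (b' j))
    (hU : ∀ i j : Fin 2, U (ab i j) = ab' i j)
    (W : EuclideanSpace ℂ (Fin 2) ≃ₗᵢ[ℂ] EuclideanSpace ℂ (Fin 2))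
    (hW : ∀ j : Fin 2, W (b j) = b' j) :
    (∀ u v : EuclideanSpace ℂ (Fin 2), IAB' (U (IAB.symm (tp u v))) = tp u (W v)) ∧
    (∀ mu nu : Fin 2 → ℝ, ∀ x : EuclideanSpace ℂ (Fin 2 × Fin 2),
      IAB' (U (IAB.symm (mulVecE
          ((∑ i : Fin 2, (mu i : ℂ) • outer (a i)) ⊗ₖ (∑ j : Fin 2, (nu j : ℂ) • outer (b j)))
          (IAB (U.symm (IAB'.symm x)))))) =
        mulVecE ((∑ i : Fin 2, (mu i : ℂ) • outer (a i)) ⊗ₖ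
          (∑ j : Fin 2, (nu j : ℂ) • outer (b' j))) x) := by
  let V : ℂ⁴ →ₗ[ℂ] ℂ⁴ := (IAB.symm.trans (U.trans IAB')).toLinearEquiv
  have hV : ∀ i j, V (tp (a i) (b j)) = tp (a i) (W (b j)) := fun i j => by
    simp [V, ← hIAB, hU, hIAB', hW]
  have hprod : ∀ u v, V (tp u v) = tp u (W v) :=
    map_tp_of_map_tp_basis ha.linearIndependent hb.linearIndependent (W := W.toLinearEquiv) hV
  refine ⟨hprod, fun mu nu x => ?_⟩
  exact (map_mulVecE_kronecker hprod _
    (map_mulVecE_sum_smul_outer hb hb' (W := W.toLinearEquiv) hW _) _).trans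
      (congrArg _ (by simp [V]))

/-- with `I_AB ab_{ij} = aᵢ ⊗ bⱼ`, `I_AB' ab'_{ij} = aᵢ ⊗ b'ⱼ`,
`U ab_{ij} = ab'_{ij}` and `W bⱼ = b'ⱼ`, the composite `I_AB' ∘ U ∘ I_AB⁻¹` is the product
evolution `𝟙 ⊗ W`, i.e. `(I_AB' ∘ U ∘ I_AB⁻¹)(u ⊗ v) = u ⊗ (W v)`; consequently conjugation
by it transforms `E_A ⊗ E_B` into `E_A ⊗ E_{B'}` for all real `μ₁,μ₂,ν₁,ν₂`, where
`E_A = Σᵢ μᵢ|aᵢ⟩⟨aᵢ|`, `E_B = Σⱼ νⱼ|bⱼ⟩⟨bⱼ|`, `E_{B'} = Σⱼ νⱼ|b'ⱼ⟩⟨b'ⱼ|`. -/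
theorem contextual_isomorphisms_give_product_evolutions
    (ab ab' : Fin 2 → Fin 2 → EuclideanSpace ℂ (Fin 2 × Fin 2))
    (hab : Orthonormal ℂ (fun q : Fin 2 × Fin 2 => ab q.1 q.2))
    (hab' : Orthonormal ℂ (fun q : Fin 2 × Fin 2 => ab' q.1 q.2))
    (a b b' : Fin 2 → EuclideanSpace ℂ (Fin 2))
    (ha : Orthonormal ℂ a) (hb : Orthonormal ℂ b) (hb' : Orthonormal ℂ b')
    (IAB IAB' U : EuclideanSpace ℂ (Fin 2 × Fin 2) ≃ₗᵢ[ℂ] EuclideanSpace ℂ (Fin 2 × Fin 2))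
    (hIAB : ∀ i j : Fin 2, IAB (ab i j) = tp (a i) (b j))
    (hIAB' : ∀ i j : Fin 2, IAB' (ab' i j) = tp (a i) (b' j))
    (hU : ∀ i j : Fin 2, U (ab i j) = ab' i j)
    (W : EuclideanSpace ℂ (Fin 2) ≃ₗᵢ[ℂ] EuclideanSpace ℂ (Fin 2))
    (hW : ∀ j : Fin 2, W (b j) = b' j) :
    (∀ u v : EuclideanSpace ℂ (Fin 2), IAB' (U (IAB.symm (tp u v))) = tp u (W v)) ∧
    (∀ mu nu : Fin 2 → ℝ, ∀ x : EuclideanSpace ℂ (Fin 2 × Fin 2),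
      IAB' (U (IAB.symm (mulVecE
          ((∑ i : Fin 2, (mu i : ℂ) • outer (a i)) ⊗ₖ (∑ j : Fin 2, (nu j : ℂ) • outer (b j)))
          (IAB (U.symm (IAB'.symm x)))))) =
        mulVecE ((∑ i : Fin 2, (mu i : ℂ) • outer (a i)) ⊗ₖ
          (∑ j : Fin 2, (nu j : ℂ) • outer (b' j))) x) :=
  contextual_isomorphisms_give_product_evolutions_general ab ab' a b b' ha hb hb' IAB IAB' U hIAB
    hIAB' hU W hW

end
end

section
/- Let {ab_{ij}}_{i,j ∈ {1,2}} and {ab'_{ij}}_{i,j ∈ {1,2}} be orthonormal bases of ℂ⁴, let {a₁, a₂}, {b₁, b₂}, {b'₁, b'₂} be orthonormal bases of ℂ², and let I_AB and I_AB' be the unitary operators on ℂ⁴ determined by I_AB ab_{ij} = aᵢ ⊗ bⱼ and I_AB' ab'_{ij} = aᵢ ⊗ b'ⱼ. Let p ∈ ℂ⁴ be a unit vector, and suppose that I_AB p and I_AB' p represent the same state, i.e. there exists α ∈ ℝ such that I_AB p = exp(α·i) • (I_AB' p). Then the marginal law holds: for each i ∈ {1,2}, |⟨ab_{i1}, p⟩|²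 + |⟨ab_{i2}, p⟩|² = |⟨ab'_{i1}, p⟩|² + |⟨ab'_{i2}, p⟩|². (Contrapositively: if the marginal law is violated for the two coincidence measurements, then the two entanglement representations I_AB p and I_AB' p of the state p do not differ by a mere phase factor.) -/
/-!
Pulling back along the isometry `I_AB`, `∑ⱼ |⟨ab_{ij}, p⟩|²` is Parseval's sum of the vector
`⟨aᵢ|₁ I_AB p ∈ ℂ²` (inner product with `aᵢ` in the first tensor factor) over the basis `b`, hence
equals `‖⟨aᵢ|₁ I_AB p‖²`; likewise for `I_AB'` and `b'`. These two norms agree because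
`I_AB p` and `I_AB' p` differ by a unimodular scalar.
-/

open scoped InnerProductSpace

noncomputable section

def partialInner (u : EuclideanSpace ℂ (Fin 2)) (q : EuclideanSpace ℂ (Fin 2 × Fin 2)) :
    EuclideanSpace ℂ (Fin 2) :=
  WithLp.toLp 2 (fun l => ∑ k, (starRingEnd ℂ) (u k) * q (k, l))

lemma inner_tp_eq_inner_partialInner (u v : EuclideanSpace ℂ (Fin 2))
    (q : EuclideanSpace ℂ (Fin 2 × Fin 2)) :
    ⟪tp u v, q⟫_ℂ = ⟪v, partialInner u q⟫_ℂ := by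
  simp only [PiLp.inner_apply, RCLike.inner_apply, partialInner, tp, Fintype.sum_prod_type,
    map_mul, Finset.sum_mul]
  rw [Finset.sum_comm]
  refine Finset.sum_congr rfl fun l _ => Finset.sum_congr rfl fun k _ => ?_
  ring

lemma partialInner_smul (u : EuclideanSpace ℂ (Fin 2)) (c : ℂ)
    (q : EuclideanSpace ℂ (Fin 2 × Fin 2)) :
    partialInner u (c • q) = c • partialInner u q := by
  ext l
  simp only [partialInner, PiLp.toLp_apply, PiLp.smul_apply, smul_eq_mul, Finset.mul_sum]
  exact Finset.sum_congr rfl fun k _ => by ring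

theorem Orthonormal.sum_sq_norm_inner_of_card_eq_finrank {𝕜 E ι : Type*} [RCLike 𝕜]
    [NormedAddCommGroup E] [InnerProductSpace 𝕜 E] [Fintype ι] [Nonempty ι] {v : ι → E}
    (hv : Orthonormal 𝕜 v) (card_eq : Fintype.card ι = Module.finrank 𝕜 E) (x : E) :
    ∑ i, ‖⟪v i, x⟫_𝕜‖ ^ 2 = ‖x‖ ^ 2 := by
  have hcoe := coe_basisOfOrthonormalOfCardEqFinrank hv card_eq
  let B := (basisOfOrthonormalOfCardEqFinrank hv card_eq).toOrthonormalBasis (by rwa [hcoe])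
  have hB : ⇑B = v := by rw [Module.Basis.coe_toOrthonormalBasis, hcoe]
  simpa only [hB] using B.sum_sq_norm_inner_right x

theorem sum_sq_norm_inner_eq_norm_sq_partialInner {E : Type*} [NormedAddCommGroup E]
    [InnerProductSpace ℂ E] (I : E →ₗᵢ[ℂ] EuclideanSpace ℂ (Fin 2 × Fin 2))
    (u : EuclideanSpace ℂ (Fin 2)) {v : Fin 2 → EuclideanSpace ℂ (Fin 2)}
    (hv : Orthonormal ℂ v) {w : Fin 2 → E} (hI : ∀ j, I (w j) = tp u (v j)) (p : E) :
    ‖⟪w 0, p⟫_ℂ‖ ^ 2 + ‖⟪w 1, p⟫_ℂ‖ ^ 2 = ‖partialInner u (I p)‖ ^ 2 := by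
  have hslice : ∀ j, ⟪w j, p⟫_ℂ = ⟪v j, partialInner u (I p)⟫_ℂ := fun j => by
    rw [← I.inner_map_map, hI, inner_tp_eq_inner_partialInner]
  rw [hslice 0, hslice 1, ← Fin.sum_univ_two (fun j => ‖⟪v j, partialInner u (I p)⟫_ℂ‖ ^ 2),
    hv.sum_sq_norm_inner_of_card_eq_finrank (by simp)]

theorem same_state_up_to_phase_implies_marginal_law_general
    (ab ab' : Fin 2 → Fin 2 → EuclideanSpace ℂ (Fin 2 × Fin 2))
    (a b b' : Fin 2 → EuclideanSpace ℂ (Fin 2))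
    (hb : Orthonormal ℂ b) (hb' : Orthonormal ℂ b')
    (IAB IAB' : EuclideanSpace ℂ (Fin 2 × Fin 2) ≃ₗᵢ[ℂ] EuclideanSpace ℂ (Fin 2 × Fin 2))
    (hIAB : ∀ i j : Fin 2, IAB (ab i j) = tp (a i) (b j))
    (hIAB' : ∀ i j : Fin 2, IAB' (ab' i j) = tp (a i) (b' j))
    (p : EuclideanSpace ℂ (Fin 2 × Fin 2))
    (hphase : ∃ α : ℝ, IAB p = Complex.exp (α * Complex.I) • IAB' p) :
    ∀ i : Fin 2,
      ‖⟪ab i 0, p⟫_ℂ‖ ^ 2 + ‖⟪ab i 1, p⟫_ℂ‖ ^ 2 =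
        ‖⟪ab' i 0, p⟫_ℂ‖ ^ 2 + ‖⟪ab' i 1, p⟫_ℂ‖ ^ 2 := by
  intro i
  obtain ⟨α, hα⟩ := hphase
  have hunit : ‖Complex.exp (α * Complex.I)‖ = 1 := Complex.norm_exp_ofReal_mul_I α
  calc ‖⟪ab i 0, p⟫_ℂ‖ ^ 2 + ‖⟪ab i 1, p⟫_ℂ‖ ^ 2
      = ‖partialInner (a i) (IAB p)‖ ^ 2 :=
        sum_sq_norm_inner_eq_norm_sq_partialInner IAB.toLinearIsometry (a i) hb (hIAB i) p
    _ = ‖partialInner (a i) (IAB' p)‖ ^ 2 := by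
        rw [hα, partialInner_smul, norm_smul, hunit, one_mul]
    _ = ‖⟪ab' i 0, p⟫_ℂ‖ ^ 2 + ‖⟪ab' i 1, p⟫_ℂ‖ ^ 2 :=
        (sum_sq_norm_inner_eq_norm_sq_partialInner IAB'.toLinearIsometry (a i) hb' (hIAB' i) p).symm

/-- with `I_AB ab_{ij} = aᵢ ⊗ bⱼ` and `I_AB' ab'_{ij} = aᵢ ⊗ b'ⱼ`, if the two
entanglement representations `I_AB p` and `I_AB' p` of a unit state `p` coincide up to a
phase factor `e^{iα}`, then the marginal law holds:
`|⟨ab_{i1}, p⟩|² + |⟨ab_{i2}, p⟩|² = |⟨ab'_{i1}, p⟩|² + |⟨ab'_{i2}, p⟩|²` for each `i`.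
(Contrapositively, a violation of the marginal law forces the two entanglement
representations of the state to differ by more than a phase factor.) -/
theorem same_state_up_to_phase_implies_marginal_law
    (ab ab' : Fin 2 → Fin 2 → EuclideanSpace ℂ (Fin 2 × Fin 2))
    (hab : Orthonormal ℂ (fun q : Fin 2 × Fin 2 => ab q.1 q.2))
    (hab' : Orthonormal ℂ (fun q : Fin 2 × Fin 2 => ab' q.1 q.2))
    (a b b' : Fin 2 → EuclideanSpace ℂ (Fin 2))
    (ha : Orthonormal ℂ a) (hb : Orthonormal ℂ b) (hb' : Orthonormal ℂ b')
    (IAB IAB' : EuclideanSpace ℂ (Fin 2 × Fin 2) ≃ₗᵢ[ℂ] EuclideanSpace ℂ (Fin 2 × Fin 2))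
    (hIAB : ∀ i j : Fin 2, IAB (ab i j) = tp (a i) (b j))
    (hIAB' : ∀ i j : Fin 2, IAB' (ab' i j) = tp (a i) (b' j))
    (p : EuclideanSpace ℂ (Fin 2 × Fin 2)) (hp : ‖p‖ = 1)
    (hphase : ∃ α : ℝ, IAB p = Complex.exp (α * Complex.I) • IAB' p) :
    ∀ i : Fin 2,
      ‖⟪ab i 0, p⟫_ℂ‖ ^ 2 + ‖⟪ab i 1, p⟫_ℂ‖ ^ 2 =
        ‖⟪ab' i 0, p⟫_ℂ‖ ^ 2 + ‖⟪ab' i 1, p⟫_ℂ‖ ^ 2 :=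
  same_state_up_to_phase_implies_marginal_law_general ab ab' a b b' hb hb' IAB IAB' hIAB hIAB' p
    hphase

end
end
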